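/- arXiv:1805.07250 — 2 statements merged into one kernel-verified Lean document; each statement's English description precedes it below -/
import Mathlib

section
/- Fix non-negative integers m, n, l and a partition κ ⊂ ⟨(m+n)^l⟩. The map (λ, K) ↦ (λ', sub_{n+l}(λ̃, C_{n+l}(K))), where λ̃ denotes the (m, n+l)-complement of λ, is a bijection from the set {(λ, K) : λ ⊂ ⟨m^{n+l}⟩, K an increasing l-element subsequence of (1, …, n+l), sub_{n+l}(λ, K) = κ} onto the set {(μ, ν) : μ, ν partitions with l(μ) ≤ m, l(ν) ≤ n, and μ ⋆_{m,n} ν = κ'}. -/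
open scoped Classical

/-- `f : ℕ → ℕ` represents a partition via its parts `f 1 ≥ f 2 ≥ ⋯`
(indices start at `1`; we normalize the unused value at `0` by `f 0 = f 1`). -/
def IsPartition (f : ℕ → ℕ) : Prop :=
  f 0 = f 1 ∧ (∀ i j, i ≤ j → f j ≤ f i) ∧ ∃ N, ∀ i, N ≤ i → f i = 0

/-- the partition `f` has length (number of positive parts) at most `r`,
i.e. `l(f) ≤ r`. -/
def LenLE (f : ℕ → ℕ) (r : ℕ) : Prop := ∀ i, r < i → f i = 0

/-- two partitions have the same parts. -/
def EqParts (f g : ℕ → ℕ) : Prop := ∀ i, 1 ≤ i → f i = g i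

/-- normalize the value at the (unused) index `0`. -/
def pad (f : ℕ → ℕ) : ℕ → ℕ := fun i => if i = 0 then f 1 else f i

/-- the multiset `{f i + N - i : i = 1, …, N}`. -/
def hooks (N : ℕ) (f : ℕ → ℕ) : Multiset ℕ :=
  (Multiset.range N).map (fun i => f (i + 1) + N - (i + 1))

/-- `lam` is the `(m,n)`-overlap of `mu` and `nu`, i.e. `mu ⋆_{m,n} nu = lam`:
`lam` is a partition of length at most `m + n` such that the sequence
`(lam i + (m+n) - i)_{i=1..m+n}` is a rearrangement of the concatenation of
`(mu i + m - i)_{i=1..m}` and `(nu j + n - j)_{j=1..n}`. -/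
def IsOverlap (m n : ℕ) (mu nu lam : ℕ → ℕ) : Prop :=
  LenLE lam (m + n) ∧ hooks (m + n) lam = hooks m mu + hooks n nu

/-- `mu ⋆_{m,n} nu = ∞`: the two hook sequences share a common value. -/
def OverlapInfinite (m n : ℕ) (mu nu : ℕ → ℕ) : Prop :=
  ∃ a, a ∈ hooks m mu ∧ a ∈ hooks n nu

/-- the sign `ε_{m,n}(mu, nu)` of the permutation sorting the concatenation of
`(mu i + m - i)_{i=1..m}` and `(nu j + n - j)_{j=1..n}` into strictly decreasing
order, computed as `(-1)` to the number of inversions. -/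
def overlapSign (m n : ℕ) (mu nu : ℕ → ℕ) : ℤ :=
  (-1) ^ (((Finset.range m ×ˢ Finset.range n).filter (fun p =>
    mu (p.1 + 1) + m - (p.1 + 1) < nu (p.2 + 1) + n - (p.2 + 1))).card)

/-- the truncation `(f_1, …, f_r)` of a partition. -/
def truncateP (f : ℕ → ℕ) (r : ℕ) : ℕ → ℕ := pad fun i => if i ≤ r then f i else 0

/-- `μ + ⟨k^l⟩ = (μ_1 + k, …, μ_l + k)`. -/
def addRect (mu : ℕ → ℕ) (k l : ℕ) : ℕ → ℕ := pad fun i => if i ≤ l then mu i + k else 0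

/-- `μ − ⟨k^l⟩ = (μ_1 − k, …, μ_l − k)`. -/
def subRect (mu : ℕ → ℕ) (k l : ℕ) : ℕ → ℕ := pad fun i => if i ≤ l then mu i - k else 0

/-- `ν ∪ a`: `ν` regarded as a sequence of length `r`, with the sequence `a`
appended after position `r`. -/
def concatSeq (nu : ℕ → ℕ) (r : ℕ) (tail : ℕ → ℕ) : ℕ → ℕ :=
  pad fun i => if i ≤ r then nu i else tail (i - r)

/-- the rectangular partition `⟨a^b⟩` (with `b` parts equal to `a`). -/
def rectP (a b : ℕ) : ℕ → ℕ := pad fun i => if i ≤ b then a else 0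

/-- the `(m,n)`-complement `λ̃ = (m − λ_n, …, m − λ_1)` of a partition `λ ⊂ ⟨m^n⟩`. -/
def complSeq (m n : ℕ) (lam : ℕ → ℕ) : ℕ → ℕ :=
  pad fun i => if i ≤ n then m - lam (n + 1 - i) else 0

noncomputable section

/-- the `i`-th part `λ'_i = #{j ≥ 1 : λ_j ≥ i}` of the conjugate partition. -/
def conjPart (f : ℕ → ℕ) (i : ℕ) : ℕ := {j : ℕ | 1 ≤ j ∧ i ≤ f j}.ncard

/-- the conjugate partition `λ'`. -/
def conjP (f : ℕ → ℕ) : ℕ → ℕ := pad fun i => conjPart f i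

/-- the set of integers `k ≤ min{m,n}` with `λ_{n+1−k} ≤ m − k`. -/
def indexSet (m n : ℕ) (lam : ℕ → ℕ) : Set ℤ :=
  {k : ℤ | k ≤ min (m : ℤ) (n : ℤ) ∧ (lam ((n : ℤ) + 1 - k).toNat : ℤ) ≤ (m : ℤ) - k}

/-- `k` is the `(m,n)`-index of `lam`: the largest integer `k ≤ min{m,n}`
with `λ_{n+1−k} ≤ m − k`. -/
def IsIndex (m n : ℕ) (lam : ℕ → ℕ) (k : ℤ) : Prop := IsGreatest (indexSet m n lam) k

/-- the `(m,n)`-index of `lam`. -/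
def indexOf (m n : ℕ) (lam : ℕ → ℕ) : ℤ := sSup (indexSet m n lam)

variable {F : Type*} [Field F]

/-- `Δ(X) = ∏_{i<j} (X_i − X_j)`. -/
def vanDet {n : ℕ} (X : Fin n → F) : F :=
  ∏ i : Fin n, ∏ j : Fin n, if i < j then X i - X j else 1

/-- `Δ(X; Y) = ∏_{x ∈ X, y ∈ Y} (x − y)`. -/
def vanPair {n m : ℕ} (X : Fin n → F) (Y : Fin m → F) : F :=
  ∏ i, ∏ j, (X i - Y j)

/-- the Schur function `s_λ(X)`. -/
def schur {n : ℕ} (lam : ℕ → ℕ) (X : Fin n → F) : F :=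
  if LenLE lam n then
    (Matrix.of fun i j : Fin n =>
      X i ^ (lam ((j : ℕ) + 1) + n - ((j : ℕ) + 1))).det / vanDet X
  else 0

/-- the subsequence of `X` indexed by `I` (in increasing order of indices). -/
def subSeq {n : ℕ} (X : Fin n → F) (I : Finset (Fin n)) : Fin I.card → F :=
  fun j => X (I.orderIsoOfFin rfl j).1

/-- the sign `ε(λ) = (−1)^{λ_1+⋯+λ_{n−k}} (−1)^{mk} (−1)^{k(k−1)/2}` from the
determinantal formula. -/
def LSsign (m n k : ℕ) (lam : ℕ → ℕ) : ℤ :=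
  (-1) ^ (∑ i ∈ Finset.range (n - k), lam (i + 1)) * (-1) ^ (m * k) *
    (-1) ^ (k * (k - 1) / 2)

/-- the Moens–Van der Jeugt block matrix. -/
def LSmat (k : ℕ) {n m : ℕ} (lam : ℕ → ℕ) (X : Fin n → F) (Y : Fin m → F) :
    Matrix (Fin (n + (m - k))) (Fin (n + (m - k))) F :=
  Matrix.of fun r c =>
    if hr : (r : ℕ) < n then
      if hc : (c : ℕ) < m then (X ⟨(r : ℕ), hr⟩ - Y ⟨(c : ℕ), hc⟩)⁻¹
      else X ⟨(r : ℕ), hr⟩ ^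
        ((lam ((c : ℕ) - m + 1) : ℤ) + (n : ℤ) - (m : ℤ) - (((c : ℕ) - m + 1 : ℕ) : ℤ))
    else
      if hc : (c : ℕ) < m then
        Y ⟨(c : ℕ), hc⟩ ^
          ((conjPart lam ((r : ℕ) - n + 1) : ℤ) + (m : ℤ) - (n : ℤ) - (((r : ℕ) - n + 1 : ℕ) : ℤ))
      else 0

/-- the Littlewood–Schur function `LS_λ(−X; Y)`, defined by the determinantal
formula of Moens and Van der Jeugt: it is `0` if the `(m,n)`-index `k` of `λ` is
negative, and otherwise equals `ε(λ) · Δ(Y;X)/(Δ(X)Δ(Y)) · det M`. -/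
def LS {n m : ℕ} (lam : ℕ → ℕ) (X : Fin n → F) (Y : Fin m → F) : F :=
  if indexOf m n lam < 0 then 0
  else (LSsign m n (indexOf m n lam).toNat lam : F) * vanPair Y X /
    (vanDet X * vanDet Y) * (LSmat (indexOf m n lam).toNat lam X Y).det

/-- `walkMu lam n I` is the partition with `i`-th part `λ_{V_i} + n + i − V_i`,
where `V_1 < ⋯ < V_card(I)` is the increasing (1-based) enumeration of `I`. -/
def walkMu (lam : ℕ → ℕ) (n : ℕ) {N : ℕ} (I : Finset (Fin N)) : ℕ → ℕ :=
  pad fun i =>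
    if h : 1 ≤ i ∧ i ≤ I.card then
      lam (((I.orderIsoOfFin rfl ⟨i - 1, by omega⟩).1 : ℕ) + 1) +
        (n + i - (((I.orderIsoOfFin rfl ⟨i - 1, by omega⟩).1 : ℕ) + 1))
    else 0

/-- `C_N(K)`: the set `{N − j + 1 : j ∈ {1,…,N} ∖ K}`. -/
def Cfin (N : ℕ) (K : Finset ℕ) : Finset ℕ :=
  (Finset.Icc 1 N \ K).image (fun j => N + 1 - j)

/-- the subpartition `sub_N(λ, s)`: its `j`-th part is
`λ_{s_j} + (N − s_j) − (r − j)`, where `s_1 < ⋯ < s_r` are the elements of `s`. -/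
def subPartF (N : ℕ) (lam : ℕ → ℕ) (s : Finset ℕ) : ℕ → ℕ :=
  pad fun j =>
    if h : 1 ≤ j ∧ j ≤ s.card then
      lam ((s.orderIsoOfFin rfl ⟨j - 1, by omega⟩).1) +
        (N - (s.orderIsoOfFin rfl ⟨j - 1, by omega⟩).1) - (s.card - j)
    else 0

end

/-- `α` is a quasi-partition associated to the subset with membership
predicate `inV` (the complement being taken inside `{1, …, m+n}`). -/
def IsQuasiPartition (m n : ℕ) (inV : ℕ → Prop) (α : ℕ → ℤ) : Prop :=
  0 ≤ α (m + n) ∧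
  (∀ i, 1 < i → i < m + n → ¬(α (i - 1) < α i ∧ α i < α (i + 1))) ∧
  (∀ i, 1 ≤ i → i < m + n → ((inV i ↔ inV (i + 1)) → α (i + 1) ≤ α i)) ∧
  (∀ i, 1 ≤ i → i < m + n → (¬(inV i ↔ inV (i + 1)) → α (i + 1) ≤ α i + 1))

/-- the integer sequence `α_1, …, α_N` is a partition: non-increasing and
non-negative. -/
def IsPartitionSeqZ (N : ℕ) (α : ℕ → ℤ) : Prop :=
  (∀ i j, 1 ≤ i → i ≤ j → j ≤ N → α j ≤ α i) ∧ ∀ i, 1 ≤ i → i ≤ N → 0 ≤ α i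

/-!
Encode a partition `f` of length at most `N` by its hooks `f i + N - i` (`1 ≤ i ≤ N`): `N`
distinct naturals that determine `f`. The hooks of `sub_N(λ, K)` are the hooks of `λ` at the
positions in `K`, and those of `sub_N(λ̃, C_N(K))` are the hooks of `λ` at the remaining
positions, mirrored by `h ↦ m + N - 1 - h`. For `λ ⊂ ⟨m^N⟩` the hooks of `λ` and the mirrored
hooks of `λ'` partition `{0, …, m + N - 1}` (Macdonald's complement lemma). Applying this to `λ`
(with `N = n + l`) and to `κ ⊂ ⟨(m+n)^l⟩` shows that the hooks of `κ'` are those of `λ'` together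
with those of `ν = sub_N(λ̃, C_N(K))`, i.e. `λ' ⋆_{m,n} ν = κ'`. Conversely `λ = μ'` is forced,
and `K` must be the set of positions at which `λ` carries a hook of `κ`.
-/

open Finset

lemma pad_of_pos {f : ℕ → ℕ} {i : ℕ} (hi : 1 ≤ i) : pad f i = f i := by
  simp only [pad]
  rw [if_neg (by omega)]

lemma antitone_pad {f : ℕ → ℕ} (hf : AntitoneOn f (Set.Ici 1)) : Antitone (pad f) := by
  intro i j hij
  simp only [pad]
  split_ifs <;>
    first
    | exact le_rfl
    | omega
    | exact hf (Set.mem_Ici.2 (by omega)) (Set.mem_Ici.2 (by omega)) (by omega)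

lemma lenLE_pad {f : ℕ → ℕ} {r : ℕ} (hr : ∀ i, r < i → f i = 0) : LenLE (pad f) r :=
  fun i hi => by rw [pad_of_pos (by omega), hr i hi]

lemma le_card_filter_Icc_iff {g : ℕ → ℕ} (hg : Antitone g) {N i : ℕ} (hi : 1 ≤ i)
    (hiN : i ≤ N) (t : ℕ) : i ≤ #{j ∈ Icc 1 N | t ≤ g j} ↔ t ≤ g i := by
  constructor
  · intro hcard
    by_contra! hti
    have hsub : {j ∈ Icc 1 N | t ≤ g j} ⊆ Icc 1 (i - 1) := by
      intro j hj
      simp only [mem_filter, mem_Icc] at hj ⊢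
      by_contra! hji
      have := hg (show i ≤ j by omega)
      omega
    have := card_le_card hsub
    simp only [Nat.card_Icc] at this
    omega
  · intro hti
    have hsub : Icc 1 i ⊆ {j ∈ Icc 1 N | t ≤ g j} := by
      intro j hj
      simp only [mem_filter, mem_Icc] at hj ⊢
      exact ⟨⟨hj.1, hj.2.trans hiN⟩, hti.trans (hg hj.2)⟩
    simpa using card_le_card hsub

lemma hooks_eq_map_Icc (N : ℕ) (f : ℕ → ℕ) :
    hooks N f = (Icc 1 N).val.map (fun j => f j + (N - j)) := by
  have hIcc : Icc 1 N = (range N).map (addRightEmbedding 1) := by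
    rw [range_eq_Ico, map_add_right_Ico]; rfl
  rw [hIcc, map_val, Multiset.map_map, hooks]
  refine Multiset.map_congr rfl fun i hi => ?_
  rw [mem_val, mem_range] at hi
  simp only [Function.comp_apply, addRightEmbedding_apply]
  omega

section Hooks

variable {f g : ℕ → ℕ} {N : ℕ}

lemma hook_lt_hook (hf : Antitone f) {i j : ℕ} (hij : i < j) (hj : j ≤ N) :
    f j + (N - j) < f i + (N - i) := by
  have := hf hij.le
  omega

lemma injOn_hook (hf : Antitone f) :
    Set.InjOn (fun j => f j + (N - j)) (Icc 1 N : Set ℕ) := by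
  intro i hi j hj hij
  simp only [coe_Icc, Set.mem_Icc] at hi hj
  by_contra hne
  rcases Nat.lt_or_gt_of_ne hne with h | h
  · exact (hook_lt_hook hf h hj.2).ne' hij
  · exact (hook_lt_hook hf h hi.2).ne hij

lemma hooks_nodup (hf : Antitone f) : (hooks N f).Nodup := by
  rw [hooks_eq_map_Icc]
  exact (Icc 1 N).nodup.map_on fun i hi j hj => injOn_hook hf (mem_val.mp hi) (mem_val.mp hj)

lemma lt_of_mem_hooks (hf : Antitone f) {a : ℕ} (ha : a ∈ hooks N f) : a < f 1 + N := by
  rw [hooks_eq_map_Icc] at ha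
  obtain ⟨j, hj, rfl⟩ := Multiset.mem_map.1 ha
  rw [mem_val, mem_Icc] at hj
  have := hf hj.1
  omega

@[simp] lemma card_hooks (N : ℕ) (f : ℕ → ℕ) : Multiset.card (hooks N f) = N := by
  simp [hooks]

lemma hooks_congr (h : ∀ j, 1 ≤ j → j ≤ N → f j = g j) : hooks N f = hooks N g := by
  rw [hooks_eq_map_Icc, hooks_eq_map_Icc]
  refine Multiset.map_congr rfl fun j hj => ?_
  rw [mem_val, mem_Icc] at hj
  rw [h j hj.1 hj.2]

/-- The hooks are strictly decreasing, so the `i`-th one is the `i`-th largest element of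
`hooks N f`. -/
lemma eq_of_hooks_eq (hf : Antitone f) (hg : Antitone g) (h : hooks N f = hooks N g) {i : ℕ}
    (hi : 1 ≤ i) (hiN : i ≤ N) : f i = g i := by
  have hcount : ∀ (φ : ℕ → ℕ) t, Multiset.countP (t ≤ ·) (hooks N φ) =
      #{j ∈ Icc 1 N | t ≤ φ j + (N - j)} := fun φ t => by
    rw [hooks_eq_map_Icc, Multiset.countP_map]; rfl
  have hanti : ∀ φ : ℕ → ℕ, Antitone φ → Antitone (fun j => φ j + (N - j)) :=
    fun φ hφ a b hab => by dsimp only; have := hφ hab; omega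
  have : f i + (N - i) = g i + (N - i) := eq_of_forall_le_iff fun t => by
    rw [← le_card_filter_Icc_iff (hanti f hf) hi hiN, ← le_card_filter_Icc_iff (hanti g hg) hi hiN,
      ← hcount, ← hcount, h]
  omega

end Hooks

section Conjugate

variable {f : ℕ → ℕ} {N : ℕ}

lemma conjPart_eq_card (hN : LenLE f N) {i : ℕ} (hi : 1 ≤ i) :
    conjPart f i = #{j ∈ Icc 1 N | i ≤ f j} := by
  rw [conjPart, ← Set.ncard_coe_finset]
  congr 1
  ext j
  simp only [Set.mem_ofPred_eq, coe_filter, mem_Icc]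
  refine ⟨fun ⟨hj, hij⟩ => ⟨⟨hj, ?_⟩, hij⟩, fun ⟨⟨hj, _⟩, hij⟩ => ⟨hj, hij⟩⟩
  by_contra! hjN
  have := hN j hjN
  omega

lemma conjPart_congr {g : ℕ → ℕ} (h : EqParts f g) : conjPart f = conjPart g := by
  ext i
  rw [conjPart, conjPart]
  congr 1
  ext j
  simp only [Set.mem_ofPred_eq]
  exact and_congr_right fun hj => by rw [h j hj]

lemma conjPart_le (hN : LenLE f N) {i : ℕ} (hi : 1 ≤ i) : conjPart f i ≤ N := by
  rw [conjPart_eq_card hN hi]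
  exact (card_filter_le _ _).trans (by simp)

lemma le_conjPart_iff (hf : Antitone f) (hN : LenLE f N) {i j : ℕ} (hi : 1 ≤ i) (hj : 1 ≤ j) :
    j ≤ conjPart f i ↔ i ≤ f j := by
  rcases le_or_gt j N with hjN | hjN
  · rw [conjPart_eq_card hN hi]
    exact le_card_filter_Icc_iff hf hj hjN i
  · have := conjPart_le hN hi
    rw [hN j hjN]
    omega

lemma conjPart_eq_zero (hf : Antitone f) {i : ℕ} (hi : f 1 < i) : conjPart f i = 0 := by
  rw [conjPart, ← Set.ncard_empty ℕ]
  congr 1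
  ext j
  simp only [Set.mem_ofPred_eq, Set.mem_empty_iff_false, iff_false, not_and, not_le]
  exact fun hj => (hf hj).trans_lt hi

lemma conjP_of_pos {i : ℕ} (hi : 1 ≤ i) : conjP f i = conjPart f i := pad_of_pos hi

lemma antitone_conjP (hN : LenLE f N) : Antitone (conjP f) := by
  refine antitone_pad fun i hi i' _ hii' => ?_
  rw [conjPart_eq_card hN hi, conjPart_eq_card hN (le_trans hi hii')]
  exact card_le_card (monotone_filter_right _ fun j _ h => le_trans hii' h)

lemma lenLE_conjP (hf : Antitone f) {m : ℕ} (hm : f 1 ≤ m) : LenLE (conjP f) m :=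
  lenLE_pad fun _ hi => conjPart_eq_zero hf (by omega)

lemma isPartition_conjP (hf : Antitone f) (hN : LenLE f N) : IsPartition (conjP f) :=
  ⟨rfl, antitone_conjP hN, f 1 + 1, fun i hi => lenLE_conjP hf le_rfl i (by omega)⟩

lemma conjP_one_le (hN : LenLE f N) : conjP f 1 ≤ N := conjPart_le hN le_rfl

lemma conjPart_conjP (hf : Antitone f) (hN : LenLE f N) {j : ℕ} (hj : 1 ≤ j) :
    conjPart (conjP f) j = f j := by
  refine eq_of_forall_le_iff fun k => ?_
  rcases Nat.eq_zero_or_pos k with rfl | hk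
  · simp
  rw [le_conjPart_iff (antitone_conjP hN) (lenLE_conjP hf le_rfl) hj hk, conjP_of_pos hk,
    le_conjPart_iff hf hN hk hj]

/-- Macdonald, *Symmetric functions and Hall polynomials*, I (1.7). -/
lemma hooks_add_map_hooks_conjP (hf : Antitone f) (hN : LenLE f N) {m : ℕ} (hm : f 1 ≤ m) :
    hooks N f + (hooks m (conjP f)).map (m + N - 1 - ·) = Multiset.range (m + N) := by
  have hf' : Antitone (conjP f) := antitone_conjP hN
  have hlt : ∀ b ∈ hooks m (conjP f), b < N + m := fun b hb =>
    (lt_of_mem_hooks hf' hb).trans_le (by have := conjP_one_le hN; omega)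
  -- `f_j - j` and `f'_i - i` cannot sum to `-1`: `i ≤ f_j` iff `j ≤ f'_i`.
  have hdisj : ∀ a ∈ hooks N f, a ∉ (hooks m (conjP f)).map (m + N - 1 - ·) := by
    intro a ha hmem
    obtain ⟨b, hb, rfl⟩ := Multiset.mem_map.1 hmem
    have hbm := hlt b hb
    rw [hooks_eq_map_Icc] at ha hb
    obtain ⟨j, hj, hja⟩ := Multiset.mem_map.1 ha
    obtain ⟨i, hi, rfl⟩ := Multiset.mem_map.1 hb
    rw [mem_val, mem_Icc] at hi hj
    have hgal := le_conjPart_iff hf hN hi.1 hj.1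
    have := conjPart_le hN hi.1
    rw [conjP_of_pos hi.1] at hja hbm
    omega
  have hnodup : (hooks N f + (hooks m (conjP f)).map (m + N - 1 - ·)).Nodup := by
    refine Multiset.nodup_add.2 ⟨hooks_nodup hf, (hooks_nodup hf').map_on ?_,
      Multiset.disjoint_left.2 (hdisj _)⟩
    intro a ha b hb hab
    have := hlt a ha
    have := hlt b hb
    omega
  refine Multiset.eq_of_le_of_card_le ((Multiset.le_iff_subset hnodup).2 fun a ha => ?_)
    (by simp [add_comm])
  rw [Multiset.mem_range]
  rcases Multiset.mem_add.1 ha with ha | ha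
  · have := lt_of_mem_hooks hf ha
    omega
  · obtain ⟨b, hb, rfl⟩ := Multiset.mem_map.1 ha
    have := hlt b hb
    omega

end Conjugate

lemma StrictMono.fin_add_sub_le {r : ℕ} {g : Fin r → ℕ} (hg : StrictMono g) {i j : Fin r}
    (hij : i ≤ j) : g i + (j - i) ≤ g j := by
  obtain ⟨d, hd⟩ := Nat.exists_eq_add_of_le (Fin.le_def.1 hij)
  induction d generalizing j with
  | zero => rw [show j = i from Fin.ext (by omega)]; simp
  | succ d ih =>
    have hlt : (i : ℕ) + d < r := by omega
    have := ih (j := ⟨i + d, hlt⟩) (Fin.le_def.2 (by simp)) rfl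
    have := hg (show (⟨i + d, hlt⟩ : Fin r) < j from Fin.lt_def.2 (by simp; omega))
    simp only at *
    omega

section Subpartition

variable {f : ℕ → ℕ} {N : ℕ} {s : Finset ℕ}

lemma subPartF_add_one (N : ℕ) (f : ℕ → ℕ) (s : Finset ℕ) (a : Fin #s) :
    subPartF N f s (a + 1) =
      f (s.orderEmbOfFin rfl a) + (N - s.orderEmbOfFin rfl a) - (#s - (a + 1)) := by
  simp only [subPartF, pad, Nat.add_one_ne_zero, if_false]
  rw [dif_pos (by omega)]
  simp [coe_orderIsoOfFin_apply]

lemma subPartF_of_card_lt (N : ℕ) (f : ℕ → ℕ) {s : Finset ℕ} {j : ℕ} (hj : #s < j) :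
    subPartF N f s j = 0 := by
  simp only [subPartF, pad]
  rw [if_neg (by omega), dif_neg (by omega)]

lemma lenLE_subPartF (N : ℕ) (f : ℕ → ℕ) (s : Finset ℕ) : LenLE (subPartF N f s) #s :=
  fun _ hj => subPartF_of_card_lt N f hj

lemma hook_orderEmbOfFin_add_le (hf : Antitone f) (hs : s ⊆ Icc 1 N) {i j : Fin #s}
    (hij : i ≤ j) :
    f (s.orderEmbOfFin rfl j) + (N - s.orderEmbOfFin rfl j) + (j - i) ≤
      f (s.orderEmbOfFin rfl i) + (N - s.orderEmbOfFin rfl i) := by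
  have hjN := (mem_Icc.1 (hs (s.orderEmbOfFin_mem rfl j))).2
  have := (s.orderEmbOfFin rfl).strictMono.fin_add_sub_le hij
  have := hf ((s.orderEmbOfFin rfl).monotone hij)
  omega

lemma hooks_subPartF (hf : Antitone f) (hs : s ⊆ Icc 1 N) :
    hooks #s (subPartF N f s) = s.val.map (fun j => f j + (N - j)) := by
  have hrange : Multiset.range #s = (univ : Finset (Fin #s)).val.map Fin.val := by
    have := congrArg Finset.val (Fin.map_valEmbedding_univ (n := #s))
    rw [map_val, Nat.Iio_eq_range] at this
    exact this.symm
  conv_rhs => rw [← map_orderEmbOfFin_univ s rfl, map_val, Multiset.map_map]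
  rw [hooks, hrange, Multiset.map_map]
  refine Multiset.map_congr rfl fun a _ => ?_
  -- the subtraction in `subPartF` never truncates, since the hooks along `s` drop by `≥ 1`
  have hlast : a ≤ ⟨#s - 1, by have := a.2; omega⟩ := Fin.le_def.2 (by simp; omega)
  have := hook_orderEmbOfFin_add_le hf hs hlast
  simp only [Function.comp_apply, subPartF_add_one, RelEmbedding.coe_toEmbedding]
  simp only at this
  omega

lemma antitone_subPartF (hf : Antitone f) (hs : s ⊆ Icc 1 N) : Antitone (subPartF N f s) := by
  refine antitone_nat_of_succ_le fun k => ?_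
  rcases Nat.eq_zero_or_pos k with rfl | hk
  · exact le_rfl
  rcases lt_or_ge #s (k + 1) with hlt | hle
  · rw [subPartF_of_card_lt N f hlt]
    exact Nat.zero_le _
  obtain ⟨a, rfl⟩ := Nat.exists_eq_add_one_of_ne_zero hk.ne'
  have h := hook_orderEmbOfFin_add_le hf hs
    (show (⟨a, by omega⟩ : Fin #s) ≤ ⟨a + 1, by omega⟩ from Fin.le_def.2 (by simp))
  have e1 := subPartF_add_one N f s ⟨a, by omega⟩
  have e2 := subPartF_add_one N f s ⟨a + 1, by omega⟩
  simp only at h e1 e2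
  rw [e1, e2]
  omega

lemma isPartition_subPartF (hf : Antitone f) (hs : s ⊆ Icc 1 N) : IsPartition (subPartF N f s) :=
  ⟨rfl, antitone_subPartF hf hs, #s + 1, fun _ hj => subPartF_of_card_lt N f (by omega)⟩

end Subpartition

section Complement

variable {lam : ℕ → ℕ} {m N : ℕ}

lemma complSeq_of_le (m N : ℕ) (lam : ℕ → ℕ) {i : ℕ} (hi : 1 ≤ i) (hiN : i ≤ N) :
    complSeq m N lam i = m - lam (N + 1 - i) := by
  rw [complSeq, pad_of_pos hi, if_pos hiN]

lemma antitone_complSeq (hf : Antitone lam) (m N : ℕ) : Antitone (complSeq m N lam) := by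
  refine antitone_pad fun i hi j _ hij => ?_
  split_ifs with hj hi'
  · have := hf (show N + 1 - j ≤ N + 1 - i by omega)
    omega
  · omega
  · exact Nat.zero_le _
  · exact le_rfl

lemma injOn_Cfin (N : ℕ) (K : Finset ℕ) : Set.InjOn (N + 1 - ·) (↑(Icc 1 N \ K) : Set ℕ) := by
  intro a ha b hb hab
  simp only [coe_sdiff, coe_Icc, Set.mem_sdiff, Set.mem_Icc] at ha hb
  dsimp only at hab
  omega

lemma Cfin_subset_Icc (N : ℕ) (K : Finset ℕ) : Cfin N K ⊆ Icc 1 N := by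
  intro a ha
  obtain ⟨j, hj, rfl⟩ := mem_image.1 ha
  rw [mem_sdiff, mem_Icc] at hj
  rw [mem_Icc]
  omega

lemma card_Cfin {K : Finset ℕ} (hK : K ⊆ Icc 1 N) : #(Cfin N K) = N - #K := by
  rw [Cfin, card_image_of_injOn (injOn_Cfin N K), card_sdiff_of_subset hK, Nat.card_Icc]
  omega

/-- Complementing `λ` in the rectangle turns each hook `h` into `m + N - 1 - h`, and `C_N(K)`
selects exactly the positions outside `K`. -/
lemma hooks_subPartF_complSeq_Cfin (hf : Antitone lam) (hm : lam 1 ≤ m) (K : Finset ℕ) :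
    hooks #(Cfin N K) (subPartF N (complSeq m N lam) (Cfin N K)) =
      ((Icc 1 N \ K).val.map (fun j => lam j + (N - j))).map (m + N - 1 - ·) := by
  rw [hooks_subPartF (antitone_complSeq hf m N) (Cfin_subset_Icc N K), Cfin,
    image_val_of_injOn (injOn_Cfin N K), Multiset.map_map, Multiset.map_map]
  refine Multiset.map_congr rfl fun j hj => ?_
  rw [mem_val, mem_sdiff, mem_Icc] at hj
  have := (hf hj.1.1).trans hm
  simp only [Function.comp_apply]
  rw [complSeq_of_le m N lam (by omega) (by omega), show N + 1 - (N + 1 - j) = j by omega]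
  omega

end Complement

lemma Multiset.map_tsub_map_tsub {c : ℕ} {s : Multiset ℕ} (hs : ∀ a ∈ s, a ≤ c) :
    (s.map (c - ·)).map (c - ·) = s := by
  rw [Multiset.map_map]
  conv_rhs => rw [← Multiset.map_id s]
  refine Multiset.map_congr rfl fun a ha => ?_
  have := hs a ha
  simp only [Function.comp_apply, id]
  omega

lemma map_filter_mem_eq_of_map_eq_add {g : ℕ → ℕ} {S : Finset ℕ} (hg : Set.InjOn g S)
    {B C : Multiset ℕ} (h : S.val.map g = B + C) :
    {j ∈ S | g j ∈ B}.val.map g = B := by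
  have hnodup : (B + C).Nodup := h ▸ S.nodup.map_on fun a ha b hb => hg ha hb
  rw [filter_val]
  calc _ = (S.val.map g).filter (· ∈ B) := (Multiset.filter_map _ g S.val).symm
    _ = B := by
      rw [h, Multiset.filter_add, Multiset.filter_eq_self.2 fun _ => id,
        Multiset.filter_eq_nil.2 fun a ha haB =>
          Multiset.disjoint_left.1 (Multiset.nodup_add.1 hnodup).2.2 haB ha, add_zero]

lemma IsPartition.antitone {f : ℕ → ℕ} (hf : IsPartition f) : Antitone f := hf.2.1

lemma eq_of_conjP_eqParts {f g : ℕ → ℕ} (hf : IsPartition f) (hg : IsPartition g) {N N' : ℕ}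
    (hfN : LenLE f N) (hgN : LenLE g N') (h : EqParts (conjP f) (conjP g)) : f = g := by
  have hpos : ∀ i, 1 ≤ i → f i = g i := fun i hi => by
    rw [← conjPart_conjP hf.antitone hfN hi, ← conjPart_conjP hg.antitone hgN hi,
      conjPart_congr h]
  funext i
  rcases Nat.eq_zero_or_pos i with rfl | hi
  · rw [hf.1, hg.1, hpos 1 le_rfl]
  · exact hpos i hi

lemma eqParts_conjP_conjP {f : ℕ → ℕ} {N : ℕ} (hf : Antitone f) (hN : LenLE f N) :
    EqParts (conjP (conjP f)) f :=
  fun _ hj => (conjP_of_pos hj).trans (conjPart_conjP hf hN hj)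

lemma eqParts_of_hooks_eq {f g : ℕ → ℕ} (hf : Antitone f) (hg : Antitone g) {r : ℕ}
    (hfr : LenLE f r) (hgr : LenLE g r) (h : hooks r f = hooks r g) : EqParts f g := by
  intro i hi
  rcases le_or_gt i r with hir | hir
  · exact eq_of_hooks_eq hf hg h hi hir
  · rw [hfr i hir, hgr i hir]

lemma le_of_mem_hooks_conjP {f : ℕ → ℕ} {N m a : ℕ} (hN : LenLE f N)
    (ha : a ∈ hooks m (conjP f)) : a ≤ m + N - 1 := by
  have := lt_of_mem_hooks (antitone_conjP hN) ha
  have := conjP_one_le hN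
  omega

lemma le_of_forall_mem_hooks_le {f : ℕ → ℕ} {m N : ℕ} (hf : LenLE f m)
    (h : ∀ a ∈ hooks m f, a ≤ m + N - 1) : f 1 ≤ N := by
  rcases Nat.eq_zero_or_pos m with rfl | hm
  · rw [hf 1 one_pos]
    exact Nat.zero_le _
  · have hmem : 1 ∈ (Icc 1 m).val := mem_val.mpr (mem_Icc.2 ⟨le_rfl, hm⟩)
    have := h _ (hooks_eq_map_Icc m f ▸ Multiset.mem_map_of_mem _ hmem)
    omega

lemma hooks_eq_map_of_eqParts_subPartF {lam kap : ℕ → ℕ} {N : ℕ} {K : Finset ℕ}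
    (hlam : Antitone lam) (hK : K ⊆ Icc 1 N) (hsub : EqParts (subPartF N lam K) kap) :
    hooks #K kap = K.val.map (fun j => lam j + (N - j)) := by
  rw [← hooks_subPartF hlam hK]
  exact hooks_congr fun j hj _ => (hsub j hj).symm

lemma Finset.val_eq_add_sdiff {S K : Finset ℕ} (h : K ⊆ S) : S.val = K.val + (S \ K).val := by
  rw [sdiff_val, add_tsub_cancel_of_le (val_le_iff.2 h)]

lemma eq_of_map_eq_of_injOn {g : ℕ → ℕ} {S K₁ K₂ : Finset ℕ} (hg : Set.InjOn g S)
    (h₁ : K₁ ⊆ S) (h₂ : K₂ ⊆ S) (h : K₁.val.map g = K₂.val.map g) : K₁ = K₂ := by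
  have himage : (K₁.image g : Set ℕ) = K₂.image g := by
    rw [image, image, h]
  rw [coe_image, coe_image] at himage
  exact_mod_cast (hg.image_eq_image_iff (coe_subset.2 h₁) (coe_subset.2 h₂)).1 himage

lemma eq_of_eqParts_subPartF {lam kap : ℕ → ℕ} {N : ℕ} {K₁ K₂ : Finset ℕ} (hlam : Antitone lam)
    (hK₁ : K₁ ⊆ Icc 1 N) (hK₂ : K₂ ⊆ Icc 1 N) (hcard : #K₁ = #K₂)
    (h₁ : EqParts (subPartF N lam K₁) kap) (h₂ : EqParts (subPartF N lam K₂) kap) : K₁ = K₂ := by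
  refine eq_of_map_eq_of_injOn (injOn_hook hlam) hK₁ hK₂ ?_
  rw [← hooks_eq_map_of_eqParts_subPartF hlam hK₁ h₁,
    ← hooks_eq_map_of_eqParts_subPartF hlam hK₂ h₂, hcard]

section Bijection

variable {m n l : ℕ} {kap : ℕ → ℕ}

theorem isOverlap_conjP_subPartF_complSeq (hkap : Antitone kap) (hkl : LenLE kap l)
    (hk1 : kap 1 ≤ m + n) {lam : ℕ → ℕ} {K : Finset ℕ} (hlam : Antitone lam)
    (hlamN : LenLE lam (n + l)) (hlam1 : lam 1 ≤ m) (hK : K ⊆ Icc 1 (n + l)) (hKl : #K = l)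
    (hsub : EqParts (subPartF (n + l) lam K) kap) :
    IsOverlap m n (conjP lam) (subPartF (n + l) (complSeq m (n + l) lam) (Cfin (n + l) K))
      (conjP kap) := by
  set hook := fun j => lam j + (n + l - j)
  set c := m + (n + l) - 1
  have hkapK : hooks l kap = K.val.map hook := hKl ▸ hooks_eq_map_of_eqParts_subPartF hlam hK hsub
  have hnu : hooks n (subPartF (n + l) (complSeq m (n + l) lam) (Cfin (n + l) K)) =
      ((Icc 1 (n + l) \ K).val.map hook).map (c - ·) := by
    rw [← hooks_subPartF_complSeq_Cfin hlam hlam1 K, card_Cfin hK, hKl, Nat.add_sub_cancel]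
  have hlamK : hooks (n + l) lam = K.val.map hook + (Icc 1 (n + l) \ K).val.map hook := by
    rw [hooks_eq_map_Icc, Finset.val_eq_add_sdiff hK, Multiset.map_add]
  have hcompl : (Icc 1 (n + l) \ K).val.map hook + (hooks m (conjP lam)).map (c - ·) =
      (hooks (m + n) (conjP kap)).map (c - ·) := by
    refine add_left_cancel (a := hooks l kap) ?_
    have hcompl_kap : hooks l kap + (hooks (m + n) (conjP kap)).map (c - ·) =
        Multiset.range (m + (n + l)) := by
      simpa only [c, ← add_assoc] using hooks_add_map_hooks_conjP hkap hkl hk1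
    rw [hcompl_kap, hkapK, ← add_assoc, ← hlamK]
    exact hooks_add_map_hooks_conjP hlam hlamN hlam1
  have hmirror := congrArg (Multiset.map (c - ·)) hcompl
  rw [Multiset.map_add, Multiset.map_tsub_map_tsub fun a ha => le_of_mem_hooks_conjP hlamN ha,
    Multiset.map_tsub_map_tsub fun a ha => by
      have := le_of_mem_hooks_conjP hkl ha; omega] at hmirror
  exact ⟨lenLE_conjP hkap hk1, by rw [← hmirror, hnu, add_comm]⟩

theorem exists_subPartF_of_isOverlap (hkap : Antitone kap) (hkl : LenLE kap l)
    (hk1 : kap 1 ≤ m + n) {mu nu : ℕ → ℕ} (hmu : Antitone mu) (hmum : LenLE mu m)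
    (hnu : Antitone nu) (hnun : LenLE nu n) (hov : IsOverlap m n mu nu (conjP kap)) :
    LenLE (conjP mu) (n + l) ∧ ∃ K ⊆ Icc 1 (n + l), #K = l ∧
      EqParts (subPartF (n + l) (conjP mu) K) kap ∧
      EqParts (subPartF (n + l) (complSeq m (n + l) (conjP mu)) (Cfin (n + l) K)) nu := by
  set lam := conjP mu
  set hook := fun j => lam j + (n + l - j)
  set c := m + (n + l) - 1
  have hbound : ∀ a ∈ hooks m mu + hooks n nu, a ≤ c := fun a ha => by
    rw [← hov.2] at ha
    have := le_of_mem_hooks_conjP hkl ha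
    omega
  have hlam : Antitone lam := antitone_conjP hmum
  have hlamN : LenLE lam (n + l) :=
    lenLE_conjP hmu <| le_of_forall_mem_hooks_le hmum fun a ha =>
      hbound a (Multiset.mem_add.2 (.inl ha))
  have hlam1 : lam 1 ≤ m := conjP_one_le hmum
  have hlam' : hooks m (conjP lam) = hooks m mu :=
    hooks_congr fun j hj _ => eqParts_conjP_conjP hmu hmum j hj
  have hlamHooks : (Icc 1 (n + l)).val.map hook = hooks l kap + (hooks n nu).map (c - ·) := by
    have hcompl_lam := hooks_add_map_hooks_conjP hlam hlamN hlam1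
    have hcompl_kap : hooks l kap + (hooks (m + n) (conjP kap)).map (c - ·) =
        Multiset.range (m + (n + l)) := by
      simpa only [c, ← add_assoc] using hooks_add_map_hooks_conjP hkap hkl hk1
    rw [hlam'] at hcompl_lam
    rw [hov.2, Multiset.map_add, ← hcompl_lam, ← add_assoc, add_right_comm] at hcompl_kap
    rw [← hooks_eq_map_Icc]
    exact (add_right_cancel hcompl_kap).symm
  set K := {j ∈ Icc 1 (n + l) | hook j ∈ hooks l kap}
  have hK : K ⊆ Icc 1 (n + l) := filter_subset _ _
  have hKkap : K.val.map hook = hooks l kap :=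
    map_filter_mem_eq_of_map_eq_add (injOn_hook hlam) hlamHooks
  have hKl : #K = l := by
    simpa using congrArg Multiset.card hKkap
  have hKc : (Icc 1 (n + l) \ K).val.map hook = (hooks n nu).map (c - ·) := by
    refine add_left_cancel (a := K.val.map hook) ?_
    rw [← Multiset.map_add, ← Finset.val_eq_add_sdiff hK, hlamHooks, hKkap]
  refine ⟨hlamN, K, hK, hKl, ?_, ?_⟩
  · have hsubHooks := hooks_subPartF hlam hK
    have hsubLen := lenLE_subPartF (n + l) lam K
    rw [hKl] at hsubHooks hsubLen
    exact eqParts_of_hooks_eq (antitone_subPartF hlam hK) hkap hsubLen hkl (hsubHooks.trans hKkap)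
  · have hcard : #(Cfin (n + l) K) = n := by rw [card_Cfin hK, hKl, Nat.add_sub_cancel]
    have hsubHooks := hooks_subPartF_complSeq_Cfin (N := n + l) hlam hlam1 K
    have hsubLen := lenLE_subPartF (n + l) (complSeq m (n + l) lam) (Cfin (n + l) K)
    rw [hcard] at hsubHooks hsubLen
    refine eqParts_of_hooks_eq
      (antitone_subPartF (antitone_complSeq hlam m _) (Cfin_subset_Icc _ _)) hnu hsubLen hnun ?_
    rw [hsubHooks, hKc,
      Multiset.map_tsub_map_tsub fun a ha => hbound a (Multiset.mem_add.2 (.inr ha))]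

end Bijection

/-- **Subpartitions parametrize pairs of overlapping partitions**
(Proposition 4.17): for a fixed `κ ⊂ ⟨(m+n)^l⟩`, the map
`(λ, K) ↦ (λ', sub_{n+l}(λ̃, C_{n+l}(K)))` is a bijection from
`{(λ, K) : λ ⊂ ⟨m^{n+l}⟩, K ⊆ (1,…,n+l), |K| = l, sub_{n+l}(λ, K) = κ}`
onto `{(μ, ν) : l(μ) ≤ m, l(ν) ≤ n, μ ⋆_{m,n} ν = κ'}`. -/
theorem subpartition_overlap_bijection
    {m n l : ℕ} (kap : ℕ → ℕ) (hkap : IsPartition kap) (hkl : LenLE kap l)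
    (hk1 : kap 1 ≤ m + n) :
    (∀ lam : ℕ → ℕ, ∀ K : Finset ℕ,
      IsPartition lam → LenLE lam (n + l) → lam 1 ≤ m →
      K ⊆ Finset.Icc 1 (n + l) → K.card = l →
      EqParts (subPartF (n + l) lam K) kap →
      IsPartition (conjP lam) ∧ LenLE (conjP lam) m ∧
      IsPartition (subPartF (n + l) (complSeq m (n + l) lam) (Cfin (n + l) K)) ∧
      LenLE (subPartF (n + l) (complSeq m (n + l) lam) (Cfin (n + l) K)) n ∧
      IsOverlap m n (conjP lam)
        (subPartF (n + l) (complSeq m (n + l) lam) (Cfin (n + l) K)) (conjP kap)) ∧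
    (∀ mu nu : ℕ → ℕ, IsPartition mu → LenLE mu m → IsPartition nu → LenLE nu n →
      IsOverlap m n mu nu (conjP kap) →
      ∃! p : (ℕ → ℕ) × Finset ℕ,
        IsPartition p.1 ∧ LenLE p.1 (n + l) ∧ p.1 1 ≤ m ∧
        p.2 ⊆ Finset.Icc 1 (n + l) ∧ p.2.card = l ∧
        EqParts (subPartF (n + l) p.1 p.2) kap ∧
        EqParts (conjP p.1) mu ∧
        EqParts (subPartF (n + l) (complSeq m (n + l) p.1) (Cfin (n + l) p.2)) nu) := by
  refine ⟨fun lam K hlam hlamN hlam1 hK hKl hsub => ?_, fun mu nu hmu hmum hnu hnun hov => ?_⟩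
  · have hcard : #(Cfin (n + l) K) = n := by rw [card_Cfin hK, hKl, Nat.add_sub_cancel]
    have hnuLen := lenLE_subPartF (n + l) (complSeq m (n + l) lam) (Cfin (n + l) K)
    rw [hcard] at hnuLen
    exact ⟨isPartition_conjP hlam.antitone hlamN, lenLE_conjP hlam.antitone hlam1,
      isPartition_subPartF (antitone_complSeq hlam.antitone m _) (Cfin_subset_Icc _ _), hnuLen,
      isOverlap_conjP_subPartF_complSeq hkap.antitone hkl hk1 hlam.antitone hlamN hlam1 hK hKl hsub⟩
  · obtain ⟨hlamN, K, hK, hKl, hsub, hnu'⟩ :=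
      exists_subPartF_of_isOverlap hkap.antitone hkl hk1 hmu.antitone hmum hnu.antitone hnun hov
    have hlam := isPartition_conjP hmu.antitone hmum
    have hconj := eqParts_conjP_conjP hmu.antitone hmum
    refine ⟨(conjP mu, K), ⟨hlam, hlamN, conjP_one_le hmum, hK, hKl, hsub, hconj, hnu'⟩, ?_⟩
    rintro ⟨lam₂, K₂⟩ ⟨hlam₂, hlam₂N, -, hK₂, hK₂l, hsub₂, hconj₂, -⟩
    obtain rfl : lam₂ = conjP mu := eq_of_conjP_eqParts hlam₂ hlam hlam₂N hlamN
      fun i hi => (hconj₂ i hi).trans (hconj i hi).symm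
    exact Prod.ext rfl <|
      eq_of_eqParts_subPartF hlam₂.antitone hK₂ hK (hK₂l.trans hKl.symm) hsub₂ hsub
end

section
/- Let λ be a partition whose (m,n)-index k satisfies k ≥ 0, let l be an integer with 0 ≤ l ≤ min{n−k, n}, and let μ, ν be partitions with l(μ) ≤ l, l(ν) ≤ n−k−l and μ ⋆_{l, n−k−l} ν = (λ_1, …, λ_{n−k}). Then: (a) the (m,l)-index of the partition μ + ⟨k^l⟩ = (μ_1+k, …, μ_l+k) equals 0; and (b) the (m, n−l)-index of the partition ν ∪ (λ_{n−k+1}, λ_{n−k+2}, …) obtained by appending the parts λ_{n−k+1}, λ_{n−k+2}, … of λ to ν equals k. -/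
open scoped Classical

lemma mem_hooks_iff {N : ℕ} {f : ℕ → ℕ} {v : ℕ} (h : v ∈ hooks N f) :
    ∃ j, 1 ≤ j ∧ j ≤ N ∧ v = f j + N - j := by
  simp only [hooks, Multiset.mem_map, Multiset.mem_range] at h
  obtain ⟨i, hi, hv⟩ := h
  exact ⟨i + 1, by omega, by omega, hv.symm⟩

lemma hook_mem {N : ℕ} (f : ℕ → ℕ) {j : ℕ} (h1 : 1 ≤ j) (h2 : j ≤ N) :
    f j + N - j ∈ hooks N f := by
  simp only [hooks, Multiset.mem_map, Multiset.mem_range]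
  exact ⟨j - 1, by omega, by rw [Nat.sub_add_cancel h1]⟩

/-- **Indices of the two partitions occurring in the first overlap identity**:
if `μ ⋆_{l, n−k−l} ν = (λ_1, …, λ_{n−k})` where `k ≥ 0` is the `(m,n)`-index of
`λ`, then (a) the `(m,l)`-index of `μ + ⟨k^l⟩` is `0`, and (b) the
`(m, n−l)`-index of `ν ∪ (λ_{n−k+1}, λ_{n−k+2}, …)` is `k`. -/
theorem index_of_overlap_pieces
    {m n k l : ℕ} (lam : ℕ → ℕ) (hlam : IsPartition lam)
    (hk : IsIndex m n lam (k : ℤ)) (hl : l ≤ min (n - k) n)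
    (mu nu : ℕ → ℕ) (hmu : IsPartition mu) (hnu : IsPartition nu)
    (hmul : LenLE mu l) (hnul : LenLE nu (n - k - l))
    (hov : IsOverlap l (n - k - l) mu nu (truncateP lam (n - k))) :
    IsIndex m l (addRect mu k l) 0 ∧
    IsIndex m (n - l) (concatSeq nu (n - k - l) (fun j => lam (n - k + j))) (k : ℤ) := by
  have hkm : k ≤ m := by have := hk.1.1; simp only [le_min_iff] at this; exact_mod_cast this.1
  have hkn : k ≤ n := by have := hk.1.1; simp only [le_min_iff] at this; exact_mod_cast this.2
  have hlnk : l ≤ n - k := le_trans hl (min_le_left _ _)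
  have hsum : hooks (n - k) (truncateP lam (n - k)) = hooks l mu + hooks (n - k - l) nu := by
    have h2 := hov.2
    rwa [show l + (n - k - l) = n - k by omega] at h2
  -- key bound coming from maximality of the index k
  have key : ∀ j : ℕ, 1 ≤ j → j ≤ n - k → (m : ℤ) - n + j ≤ lam j := by
    intro j hj1 hj2
    by_contra hcon
    push_neg at hcon
    set j' : ℤ := (n : ℤ) + 1 - j with hj'
    by_cases hj'm : j' ≤ m
    · have hmem : j' ∈ indexSet m n lam := by
        constructor
        · exact le_min hj'm (by omega)
        · have e : ((n : ℤ) + 1 - j').toNat = j := by omega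
          rw [e]; omega
      have := hk.2 hmem
      omega
    · omega
  constructor
  · -- part (a)
    constructor
    · constructor
      · exact le_min (by positivity) (by positivity)
      · have e : ((l : ℤ) + 1 - 0).toNat = l + 1 := by omega
        rw [e]
        have : addRect mu k l (l + 1) = 0 := by
          simp [addRect, pad]
        rw [this]; omega
    · intro x hx
      obtain ⟨hx1, hx2⟩ := hx
      by_contra hx0
      push_neg at hx0
      have hxl : x ≤ l := le_trans hx1 (min_le_right _ _)
      set i : ℕ := ((l : ℤ) + 1 - x).toNat with hi
      have hi1 : 1 ≤ i := by omega
      have hil : i ≤ l := by omega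
      have hval : addRect mu k l i = mu i + k := by
        simp [addRect, pad, hil, show i ≠ 0 by omega]
      rw [hval] at hx2
      have hm : mu i + l - i ∈ hooks (n - k) (truncateP lam (n - k)) := by
        rw [hsum]
        exact Multiset.mem_add.2 (Or.inl (hook_mem mu hi1 hil))
      obtain ⟨j, hj1, hj2, hje⟩ := mem_hooks_iff hm
      have htr : truncateP lam (n - k) j = lam j := by
        simp [truncateP, pad, hj2, show j ≠ 0 by omega]
      rw [htr] at hje
      have hkey := key j hj1 hj2
      omega
  · -- part (b)
    constructor
    · constructor
      · exact le_min (by exact_mod_cast hkm) (by omega)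
      · have e : (((n - l : ℕ) : ℤ) + 1 - k).toNat = n - k - l + 1 := by omega
        rw [e]
        have hval : concatSeq nu (n - k - l) (fun j => lam (n - k + j)) (n - k - l + 1)
            = lam (n - k + 1) := by
          simp [concatSeq, pad]
        rw [hval]
        have := hk.1.2
        have e2 : ((n : ℤ) + 1 - k).toNat = n - k + 1 := by omega
        rw [e2] at this; exact this
    · intro x hx
      obtain ⟨hx1, hx2⟩ := hx
      by_contra hx0
      push_neg at hx0
      have hxl : x ≤ ((n - l : ℕ) : ℤ) := le_trans hx1 (min_le_right _ _)
      set p : ℕ := (((n - l : ℕ) : ℤ) + 1 - x).toNat with hp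
      have hp1 : 1 ≤ p := by omega
      have hp2 : p ≤ n - k - l := by omega
      have hval : concatSeq nu (n - k - l) (fun j => lam (n - k + j)) p = nu p := by
        simp [concatSeq, pad, hp2, show p ≠ 0 by omega]
      rw [hval] at hx2
      have hm : nu p + (n - k - l) - p ∈ hooks (n - k) (truncateP lam (n - k)) := by
        rw [hsum]
        exact Multiset.mem_add.2 (Or.inr (hook_mem nu hp1 hp2))
      obtain ⟨j, hj1, hj2, hje⟩ := mem_hooks_iff hm
      have htr : truncateP lam (n - k) j = lam j := by
        simp [truncateP, pad, hj2, show j ≠ 0 by omega]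
      rw [htr] at hje
      have hkey := key j hj1 hj2
      omega
end
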